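/- Let T ∈ C^{d×d} be the cyclic shift (Te_k = e_{k+1 mod d}), M ∈ C^{r×r} the modulation matrix (Me_k = e^{2πik/r} e_k), and X_0 = [I_r; 0] ∈ C^{d×r}. Then the 4dr matrices {i^a T^b X_0 M^{-c} : a ∈ Z/4, b ∈ Z/d, c ∈ Z/r} are pairwise distinct elements of St_C(d,r), and any two distinct elements X, Y satisfy Re Tr(X*Y) ≤ 0, i.e., ||X - Y||_Fro ≥ sqrt(2r). -/

import Mathlib

/-!
Every matrix `iᵃ Tᵇ X₀ M⁻ᶜ` has a single nonzero entry in each column: column `j` is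
`iᵃ ζ^(-jc) e_(j+b)` with `ζ = exp (2πi/r)`. Hence `Yᴴ Y'` can be read off entrywise. Its
diagonal vanishes unless `b = b'`, and then its trace is `conj(iᵃ) i^a'` times the geometric sum
`∑ⱼ (ζ^c / ζ^c')^j`, which is `r δ_{c c'}`. So distinct codewords have trace `0` or
`i^(a' - a) r` with `a ≠ a'`, whose real part is `≤ 0`; for isometries
`‖X - Y‖² = 2r - 2 Re Tr(XᴴY)` turns this into the distance bound.
-/

open Matrix Complex

/-- Cyclic shift matrix: `T eₖ = e_{k+1 mod d}`. -/
def shiftT (d : ℕ) : Matrix (Fin d) (Fin d) ℂ :=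
  Matrix.of fun i j => if (i : ℕ) = ((j : ℕ) + 1) % d then 1 else 0

/-- Inverse modulation matrix: `diag(e^{-2πik/r})`, so that `modMinv r ^ c = M^{-c}`. -/
noncomputable def modMinv (r : ℕ) : Matrix (Fin r) (Fin r) ℂ :=
  Matrix.diagonal fun k => Complex.exp (-(2 * Real.pi * Complex.I * k / r))

/-- `X₀ = [I_r ; 0] ∈ ℂ^{d×r}`. -/
def X₀ (d r : ℕ) : Matrix (Fin d) (Fin r) ℂ :=
  Matrix.of fun i j => if (i : ℕ) = (j : ℕ) then 1 else 0

/-- The frobenius distance. -/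
noncomputable def frobDist {d r : ℕ} (X Y : Matrix (Fin d) (Fin r) ℂ) : ℝ :=
  Real.sqrt (∑ i, ∑ j, ‖X i j - Y i j‖ ^ 2)

namespace Matrix

variable {l m n α : Type*} [DecidableEq m]

def colMonomial [Zero α] (σ : n → m) (w : n → α) : Matrix m n α :=
  of fun i j => if i = σ j then w j else 0

section Semiring

variable [Fintype m] [NonUnitalNonAssocSemiring α] (σ : n → m) (w : n → α)

theorem mul_colMonomial (A : Matrix l m α) :
    A * colMonomial σ w = of fun i j => A i (σ j) * w j := by
  ext i j
  simp [mul_apply, colMonomial]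

theorem colMonomial_mul_colMonomial [DecidableEq l] (τ : m → l) (v : m → α) :
    colMonomial τ v * colMonomial σ w = colMonomial (τ ∘ σ) fun j => v (σ j) * w j := by
  rw [mul_colMonomial]
  ext i j
  simp [colMonomial, ite_mul]

end Semiring

theorem colMonomial_mul_diagonal [Fintype n] [DecidableEq n] [NonUnitalNonAssocSemiring α]
    (σ : n → m) (w v : n → α) :
    colMonomial σ w * diagonal v = colMonomial σ (w * v) := by
  ext i j
  simp [colMonomial, mul_diagonal, ite_mul]

theorem smul_colMonomial [MulZeroClass α] (c : α) (σ : n → m) (w : n → α) :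
    c • colMonomial σ w = colMonomial σ (c • w) := by
  ext i j
  simp [colMonomial]

section StarRing

variable [Fintype m] [NonUnitalSemiring α] [StarRing α]

theorem conjTranspose_colMonomial_mul_colMonomial (σ τ : n → m) (w v : n → α) :
    (colMonomial σ w)ᴴ * colMonomial τ v =
      of fun j k => if σ j = τ k then star (w j) * v k else 0 := by
  rw [mul_colMonomial]
  ext j k
  simp only [of_apply, conjTranspose_apply, colMonomial, eq_comm (a := τ k)]
  split_ifs <;> simp

theorem trace_conjTranspose_colMonomial_mul_colMonomial [Fintype n] (σ τ : n → m)
    (w v : n → α) :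
    trace ((colMonomial σ w)ᴴ * colMonomial τ v) =
      ∑ j, if σ j = τ j then star (w j) * v j else 0 := by
  simp [trace, conjTranspose_colMonomial_mul_colMonomial]

end StarRing

theorem conjTranspose_colMonomial_mul_self [Fintype m] [Semiring α] [StarRing α] [DecidableEq n]
    {σ : n → m} (hσ : σ.Injective)
    {w : n → α} (hw : ∀ j, star (w j) * w j = 1) :
    (colMonomial σ w)ᴴ * colMonomial σ w = 1 := by
  ext j k
  simp only [conjTranspose_colMonomial_mul_colMonomial, of_apply, one_apply, hσ.eq_iff]
  split_ifs with h
  · exact h ▸ hw j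
  · rfl

end Matrix

theorem IsPrimitiveRoot.geom_sum_pow_div_pow {K : Type*} [Field K] {ζ : K} {r : ℕ}
    (hζ : IsPrimitiveRoot ζ r) {c c' : ℕ} (hc : c < r) (hc' : c' < r) :
    ∑ k ∈ Finset.range r, (ζ ^ c / ζ ^ c') ^ k = if c = c' then (r : K) else 0 := by
  have hζ0 : ζ ≠ 0 := hζ.ne_zero (by omega)
  split_ifs with h
  · simp [h, hζ0]
  · have hμ : ζ ^ c / ζ ^ c' ≠ 1 := fun h1 =>
      h (hζ.pow_inj hc hc' (div_eq_one_iff_eq (pow_ne_zero _ hζ0) |>.mp h1))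
    have hμr : (ζ ^ c / ζ ^ c') ^ r = 1 := by
      rw [show (ζ ^ c / ζ ^ c') ^ r = (ζ ^ r) ^ c / (ζ ^ r) ^ c' by ring, hζ.pow_eq_one]
      simp
    rw [geom_sum_eq hμ, hμr, sub_self, zero_div]

theorem Complex.re_star_I_pow_mul_I_pow_nonpos {a a' : Fin 4} (h : a ≠ a') :
    (star (I ^ (a : ℕ)) * I ^ (a' : ℕ)).re ≤ 0 := by
  fin_cases a <;> fin_cases a' <;> simp_all [pow_succ]

theorem Matrix.re_trace_conjTranspose_mul_self {m n : Type*} [Fintype m] [Fintype n]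
    (A : Matrix m n ℂ) : (trace (Aᴴ * A)).re = ∑ i, ∑ j, ‖A i j‖ ^ 2 := by
  simp only [trace, diag_apply, mul_apply, conjTranspose_apply, re_sum, star_def, conj_mul',
    ← ofReal_pow, ofReal_re]
  exact Finset.sum_comm

theorem frobDist_eq_sqrt {d r : ℕ} (X Z : Matrix (Fin d) (Fin r) ℂ) :
    frobDist X Z = Real.sqrt (trace ((X - Z)ᴴ * (X - Z))).re := by
  rw [frobDist, re_trace_conjTranspose_mul_self]
  rfl

theorem frobDist_eq_of_isometry {d r : ℕ} {X Z : Matrix (Fin d) (Fin r) ℂ}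
    (hX : Xᴴ * X = 1) (hZ : Zᴴ * Z = 1) :
    frobDist X Z = Real.sqrt (2 * r - 2 * (trace (Xᴴ * Z)).re) := by
  have hZX : trace (Zᴴ * X) = star (trace (Xᴴ * Z)) := by
    rw [← trace_conjTranspose, conjTranspose_mul, conjTranspose_conjTranspose]
  rw [frobDist_eq_sqrt, conjTranspose_sub, Matrix.sub_mul, Matrix.mul_sub, Matrix.mul_sub, hX, hZ,
    trace_sub, trace_sub, trace_sub, hZX, trace_one]
  simp only [sub_re, star_def, conj_re, Fintype.card_fin, natCast_re]
  ring_nf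

noncomputable def stiefelOrthoplexPoint (d r : ℕ) (p : Fin 4 × Fin d × Fin r) :
    Matrix (Fin d) (Fin r) ℂ :=
  I ^ (p.1 : ℕ) • (shiftT d ^ (p.2.1 : ℕ) * X₀ d r * modMinv r ^ (p.2.2 : ℕ))

theorem shiftT_eq_colMonomial (d : ℕ) [NeZero d] : shiftT d = colMonomial (· + 1) 1 := by
  ext i j
  simp [shiftT, colMonomial, Fin.ext_iff, Fin.val_add, Nat.add_mod]

open Fin.NatCast in
theorem shiftT_pow_eq_colMonomial (d : ℕ) [NeZero d] (n : ℕ) :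
    shiftT d ^ n = colMonomial (fun j : Fin d => j + (n : Fin d)) 1 := by
  induction n with
  | zero => ext i j; simp [colMonomial, one_apply]
  | succ n ih =>
    rw [pow_succ, ih, shiftT_eq_colMonomial, colMonomial_mul_colMonomial]
    congr 1
    · ext j : 1; simp only [Function.comp_apply, Nat.cast_succ]; abel
    · ext; simp

theorem X₀_eq_colMonomial {d r : ℕ} (h : r ≤ d) :
    X₀ d r = colMonomial (Fin.castLE h) 1 := by
  ext i j
  simp [X₀, colMonomial, Fin.ext_iff]

theorem modMinv_pow_eq_diagonal (r c : ℕ) :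
    modMinv r ^ c =
      diagonal fun k : Fin r => (exp (2 * Real.pi * I / r) ^ (k : ℕ))⁻¹ ^ c := by
  rw [modMinv, diagonal_pow]
  congr 1
  ext k
  rw [Pi.pow_apply]
  congr 1
  rw [← exp_nat_mul, ← exp_neg]
  ring_nf

theorem stiefelOrthoplexPoint_eq_colMonomial {d r : ℕ} [NeZero d] (h : r ≤ d)
    (p : Fin 4 × Fin d × Fin r) :
    stiefelOrthoplexPoint d r p =
      colMonomial (fun j => Fin.castLE h j + p.2.1) fun j =>
        I ^ (p.1 : ℕ) * (exp (2 * Real.pi * I / r) ^ (j : ℕ))⁻¹ ^ (p.2.2 : ℕ) := by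
  rw [stiefelOrthoplexPoint, shiftT_pow_eq_colMonomial, X₀_eq_colMonomial h,
    colMonomial_mul_colMonomial, modMinv_pow_eq_diagonal, colMonomial_mul_diagonal,
    smul_colMonomial, Fin.cast_val_eq_self]
  congr 1
  ext j
  simp

theorem conjTranspose_stiefelOrthoplexPoint_mul_self {d r : ℕ} [NeZero d] (h : r ≤ d)
    (p : Fin 4 × Fin d × Fin r) :
    (stiefelOrthoplexPoint d r p)ᴴ * stiefelOrthoplexPoint d r p = 1 := by
  have hζ : ‖exp (2 * Real.pi * I / r)‖ = 1 :=
    (isPrimitiveRoot_exp r p.2.2.pos.ne').norm'_eq_one p.2.2.pos.ne'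
  rw [stiefelOrthoplexPoint_eq_colMonomial h]
  refine conjTranspose_colMonomial_mul_self ((add_left_injective _).comp (Fin.castLE_injective h))
    fun j => ?_
  rw [star_def, conj_mul']
  simp [hζ]

theorem trace_conjTranspose_stiefelOrthoplexPoint_mul {d r : ℕ} [NeZero d] (h : r ≤ d)
    (p q : Fin 4 × Fin d × Fin r) :
    trace ((stiefelOrthoplexPoint d r p)ᴴ * stiefelOrthoplexPoint d r q) =
      if p.2 = q.2 then star (I ^ (p.1 : ℕ)) * I ^ (q.1 : ℕ) * r else 0 := by
  obtain ⟨a, b, c⟩ := p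
  obtain ⟨a', b', c'⟩ := q
  rw [stiefelOrthoplexPoint_eq_colMonomial h, stiefelOrthoplexPoint_eq_colMonomial h,
    trace_conjTranspose_colMonomial_mul_colMonomial]
  simp only [add_right_inj]
  set ζ := exp (2 * Real.pi * I / r)
  have hζ : IsPrimitiveRoot ζ r := isPrimitiveRoot_exp r c.pos.ne'
  have hζ_star : star ζ = ζ⁻¹ := by
    rw [star_def, ← RCLike.inv_eq_conj (hζ.norm'_eq_one c.pos.ne')]
  by_cases hb : b = b'
  · subst hb
    have hterm : ∀ j : Fin r, star (I ^ (a : ℕ) * ((ζ ^ (j : ℕ))⁻¹) ^ (c : ℕ)) *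
        (I ^ (a' : ℕ) * ((ζ ^ (j : ℕ))⁻¹) ^ (c' : ℕ)) =
        star (I ^ (a : ℕ)) * I ^ (a' : ℕ) * (ζ ^ (c : ℕ) / ζ ^ (c' : ℕ)) ^ (j : ℕ) := by
      intro j
      simp only [star_mul', star_pow, star_inv₀, hζ_star, inv_pow, inv_inv]
      ring
    simp only [if_true, hterm]
    rw [← Finset.mul_sum,
      Fin.sum_univ_eq_sum_range (fun j => (ζ ^ (c : ℕ) / ζ ^ (c' : ℕ)) ^ j),
      hζ.geom_sum_pow_div_pow c.2 c'.2]
    simp [Fin.ext_iff]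
  · simp [hb]

theorem re_trace_conjTranspose_stiefelOrthoplexPoint_mul_nonpos {d r : ℕ} [NeZero d] (h : r ≤ d)
    {p q : Fin 4 × Fin d × Fin r} (hpq : p ≠ q) :
    (trace ((stiefelOrthoplexPoint d r p)ᴴ * stiefelOrthoplexPoint d r q)).re ≤ 0 := by
  rw [trace_conjTranspose_stiefelOrthoplexPoint_mul h]
  split_ifs with h₂
  · have h₁ : p.1 ≠ q.1 := fun h₁ => hpq (Prod.ext h₁ h₂)
    simp only [mul_re, natCast_re, natCast_im, mul_zero, sub_zero]
    exact mul_nonpos_of_nonpos_of_nonneg (re_star_I_pow_mul_I_pow_nonpos h₁) r.cast_nonneg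
  · rfl

theorem complex_stiefel_orthoplex_construction (d r : ℕ) (hr : 1 ≤ r) (hdr : r ≤ d)
    (Y : Fin 4 × Fin d × Fin r → Matrix (Fin d) (Fin r) ℂ)
    (hY : ∀ p : Fin 4 × Fin d × Fin r,
      Y p = (Complex.I ^ (p.1 : ℕ)) •
        (shiftT d ^ (p.2.1 : ℕ) * X₀ d r * modMinv r ^ (p.2.2 : ℕ))) :
    Function.Injective Y ∧
    (∀ p, (Y p)ᴴ * Y p = 1) ∧
    (∀ p q, p ≠ q →
      RCLike.re (Matrix.trace ((Y p)ᴴ * Y q)) ≤ 0 ∧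
      Real.sqrt (2 * r) ≤ frobDist (Y p) (Y q)) := by
  have : NeZero d := ⟨by omega⟩
  obtain rfl : Y = stiefelOrthoplexPoint d r := funext hY
  have hunit := conjTranspose_stiefelOrthoplexPoint_mul_self (r := r) hdr
  have hre : ∀ {p q}, p ≠ q → _ := re_trace_conjTranspose_stiefelOrthoplexPoint_mul_nonpos hdr
  refine ⟨fun p q hpq => ?_, hunit, fun p q hpq => ⟨hre hpq, ?_⟩⟩
  · by_contra hne
    have := hre hne
    rw [hpq, hunit, trace_one, Fintype.card_fin, natCast_re, Nat.cast_nonpos] at this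
    omega
  · rw [frobDist_eq_of_isometry (hunit p) (hunit q)]
    exact Real.sqrt_le_sqrt (by linarith [hre hpq])
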